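/- arXiv:1308.4604 — 3 statements merged into one kernel-verified Lean document; each statement's English description precedes it below -/
import Mathlib

section
/- Under the hypotheses of the contraction fixed-point above, the fixed point (w, ξ, η) satisfies, with u(τ) = e^{−τ−T} ξ(τ) and v(τ) = e^{τ−T} η(τ): |w(τ) − w₀| ≤ C r² T e^{−2T}, |u(τ) − u₊ e^{−τ−T}| ≤ C r² e^{−2T}, and |v(τ) − v₋ e^{τ−T}| ≤ C r² e^{−2T} for all |τ| ≤ T; moreover if r < C⁻¹ then |u(τ)| ≤ r and |v(τ)| ≤ r for all |τ| ≤ T. -/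
/-!
At a fixed point of `shilMap`, each component minus its boundary value is the integral of the
nonlinearity against an exponential weight. Bounding the nonlinearity by `C r²` and integrating
the weight exactly gives the estimates; for `u` and `v` the prefactor `e^{∓τ-T}` cancels the growth
of the integrated weight and leaves `C r² e^{-2T} (1 - e^{∓τ-T})`. With `ε = e^{-τ-T}` this bounds
`‖u(τ)‖` by the convex combination `ε ‖u₊‖ + (1 - ε) C r² e^{-2T}` (similarly for `v`), and both
terms are at most `r` once `C r < 1`.
-/

open MeasureTheory Set

/-- The Shilnikov integral-equation map `F` associated to the boundary value problem. -/
noncomputable def shilMap {W K : Type*} [NormedAddCommGroup W] [NormedSpace ℝ W]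
    [NormedAddCommGroup K] [NormedSpace ℝ K]
    (T : ℝ) (w₀ : W) (uP vM : K)
    (g₁ : W × K × K → ℝ → W) (g₂ g₃ : W × K × K → ℝ → K)
    (f : ℝ → W × K × K) : ℝ → W × K × K :=
  fun τ =>
    (w₀ + ∫ s in (0:ℝ)..τ, Real.exp (-2*T) • g₁ (f s) s,
     uP + ∫ s in (-T)..τ, Real.exp (s - T) • g₂ (f s) s,
     vM + ∫ s in T..τ, Real.exp (-s - T) • g₃ (f s) s)

section ExponentialWeights

variable {E : Type*} [NormedAddCommGroup E] [NormedSpace ℝ E]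

theorem norm_integral_exp_smul_le {g : ℝ → E} {a b c M : ℝ} (hab : a ≤ b)
    (hg : ∀ s ∈ Ioc a b, ‖g s‖ ≤ M) :
    ‖∫ s in a..b, Real.exp (s - c) • g s‖ ≤ M * (Real.exp (b - c) - Real.exp (a - c)) :=
  calc ‖∫ s in a..b, Real.exp (s - c) • g s‖ ≤ ∫ s in a..b, M * Real.exp (s - c) := by
        have hcont : Continuous fun s => M * Real.exp (s - c) := by fun_prop
        refine intervalIntegral.norm_integral_le_of_norm_le hab (.of_forall fun s hs => ?_)
          (hcont.intervalIntegrable a b)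
        rw [norm_smul, Real.norm_of_nonneg (Real.exp_pos _).le, mul_comm]
        exact mul_le_mul_of_nonneg_right (hg s hs) (Real.exp_pos _).le
    _ = M * (Real.exp (b - c) - Real.exp (a - c)) := by
        rw [intervalIntegral.integral_const_mul,
          intervalIntegral.integral_comp_sub_right Real.exp c, integral_exp]

theorem norm_exp_smul_integral_exp_smul_le {g : ℝ → E} {T τ M : ℝ} (hτ : -T ≤ τ)
    (hg : ∀ s ∈ Icc (-T) τ, ‖g s‖ ≤ M) :
    ‖Real.exp (-τ - T) • ∫ s in -T..τ, Real.exp (s - T) • g s‖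
      ≤ M * Real.exp (-2 * T) * (1 - Real.exp (-τ - T)) := by
  rw [norm_smul, Real.norm_of_nonneg (Real.exp_pos _).le]
  calc Real.exp (-τ - T) * ‖∫ s in -T..τ, Real.exp (s - T) • g s‖
      ≤ Real.exp (-τ - T) * (M * (Real.exp (τ - T) - Real.exp (-T - T))) := by
        gcongr
        exact norm_integral_exp_smul_le hτ fun s hs => hg s (Ioc_subset_Icc_self hs)
    _ = M * Real.exp (-2 * T) * (1 - Real.exp (-τ - T)) := by
        have hprod : Real.exp (-τ - T) * Real.exp (τ - T) = Real.exp (-2 * T) := by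
          rw [← Real.exp_add]; ring_nf
        rw [show -T - T = -2 * T by ring]
        linear_combination M * hprod

theorem norm_exp_smul_integral_exp_neg_smul_le {g : ℝ → E} {T τ M : ℝ} (hτ : τ ≤ T)
    (hg : ∀ s ∈ Icc τ T, ‖g s‖ ≤ M) :
    ‖Real.exp (τ - T) • ∫ s in T..τ, Real.exp (-s - T) • g s‖
      ≤ M * Real.exp (-2 * T) * (1 - Real.exp (τ - T)) := by
  have reflected := norm_exp_smul_integral_exp_smul_le (g := fun s => g (-s)) (τ := -τ)
    (neg_le_neg hτ) fun s hs => hg (-s) ⟨le_neg_of_le_neg hs.2, neg_le.mp hs.1⟩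
  have hreflect : ∫ s in T..τ, Real.exp (-s - T) • g s
      = -∫ s in -T..-τ, Real.exp (s - T) • g (-s) := by
    have hneg : ∫ s in -T..-τ, Real.exp (s - T) • g (-s)
        = ∫ s in -T..-τ, (fun x => Real.exp (-x - T) • g x) (-s) := by
      simp only [neg_neg]
    rw [hneg, intervalIntegral.integral_comp_neg (fun x => Real.exp (-x - T) • g x), neg_neg,
      neg_neg, intervalIntegral.integral_symm]
  rw [neg_neg] at reflected
  rwa [hreflect, smul_neg, norm_neg]

theorem norm_integral_le_of_abs_le {g : ℝ → E} {T τ M : ℝ} (hτ : |τ| ≤ T)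
    (hg : ∀ s ∈ Icc (-T) T, ‖g s‖ ≤ M) : ‖∫ s in 0..τ, g s‖ ≤ M * T := by
  have hT : 0 ≤ T := (abs_nonneg τ).trans hτ
  have hsub : uIoc 0 τ ⊆ Icc (-T) T :=
    uIoc_subset_uIcc.trans (uIcc_subset_Icc ⟨neg_nonpos.mpr hT, hT⟩ (abs_le.mp hτ))
  have hM : 0 ≤ M := (norm_nonneg _).trans (hg 0 ⟨neg_nonpos.mpr hT, hT⟩)
  calc ‖∫ s in 0..τ, g s‖ ≤ M * |τ - 0| :=
        intervalIntegral.norm_integral_le_of_norm_le_const fun s hs => hg s (hsub hs)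
    _ ≤ M * T := by rw [sub_zero]; gcongr

theorem norm_smul_le_of_norm_smul_sub_le {x y : E} {e δ r : ℝ} (he₀ : 0 ≤ e) (he₁ : e ≤ 1)
    (hy : ‖y‖ ≤ r) (hδ : δ ≤ r) (h : ‖e • (x - y)‖ ≤ δ * (1 - e)) : ‖e • x‖ ≤ r :=
  calc ‖e • x‖ ≤ ‖e • y‖ + ‖e • (x - y)‖ := by
        rw [smul_sub]; exact norm_le_norm_add_norm_sub' _ _
    _ ≤ e * r + δ * (1 - e) := by
        rw [norm_smul e y, Real.norm_of_nonneg he₀]; gcongr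
    _ ≤ e * r + r * (1 - e) := by gcongr
    _ = r := by ring

end ExponentialWeights

theorem mul_sq_mul_le_of_lt_inv {C r e : ℝ} (hr : 0 < r) (he : e ≤ 1) (hrC : r < C⁻¹) :
    C * r ^ 2 * e ≤ r := by
  have hC : 0 < C := inv_pos.mp (hr.trans hrC)
  have hCr : C * r < 1 := (lt_inv_mul_iff₀ hC).mp (by rwa [mul_one])
  calc C * r ^ 2 * e ≤ C * r ^ 2 := mul_le_of_le_one_right (by positivity) he
    _ = (C * r) * r := by ring
    _ ≤ r := mul_le_of_le_one_left hr.le hCr.le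

theorem shilMap_eq_iff {W K : Type*} [NormedAddCommGroup W] [NormedSpace ℝ W]
    [NormedAddCommGroup K] [NormedSpace ℝ K] {T τ : ℝ} {w₀ : W} {uP vM : K}
    {g₁ : W × K × K → ℝ → W} {g₂ g₃ : W × K × K → ℝ → K} {f : ℝ → W × K × K} :
    shilMap T w₀ uP vM g₁ g₂ g₃ f τ = f τ ↔
      (f τ).1 - w₀ = ∫ s in (0:ℝ)..τ, Real.exp (-2*T) • g₁ (f s) s ∧
      (f τ).2.1 - uP = ∫ s in (-T)..τ, Real.exp (s - T) • g₂ (f s) s ∧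
      (f τ).2.2 - vM = ∫ s in T..τ, Real.exp (-s - T) • g₃ (f s) s := by
  simp only [shilMap, Prod.ext_iff, sub_eq_iff_eq_add', eq_comm]

theorem stmt5_general (m k : ℕ) (C : ℝ) :
    ∃ r₀ > 0, ∀ r : ℝ, 0 < r → r ≤ r₀ →
    ∀ T : ℝ, 1 ≤ T →
    ∀ (w₀ : EuclideanSpace ℝ (Fin (2*m))) (uP vM : EuclideanSpace ℝ (Fin k)),
      ‖uP‖ ≤ r → ‖vM‖ ≤ r →
    ∀ (g₁ : EuclideanSpace ℝ (Fin (2*m)) × EuclideanSpace ℝ (Fin k) × EuclideanSpace ℝ (Fin k)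
        → ℝ → EuclideanSpace ℝ (Fin (2*m)))
      (g₂ g₃ : EuclideanSpace ℝ (Fin (2*m)) × EuclideanSpace ℝ (Fin k) × EuclideanSpace ℝ (Fin k)
        → ℝ → EuclideanSpace ℝ (Fin k)),
    Continuous (fun p : (EuclideanSpace ℝ (Fin (2*m)) × EuclideanSpace ℝ (Fin k) ×
        EuclideanSpace ℝ (Fin k)) × ℝ => g₁ p.1 p.2) →
    Continuous (fun p : (EuclideanSpace ℝ (Fin (2*m)) × EuclideanSpace ℝ (Fin k) ×
        EuclideanSpace ℝ (Fin k)) × ℝ => g₂ p.1 p.2) →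
    Continuous (fun p : (EuclideanSpace ℝ (Fin (2*m)) × EuclideanSpace ℝ (Fin k) ×
        EuclideanSpace ℝ (Fin k)) × ℝ => g₃ p.1 p.2) →
    (∀ z, ‖z - (w₀, 0, 0)‖ ≤ 2*r → ∀ s ∈ Icc (-T) T,
        ‖g₁ z s‖ ≤ C * r^2 ∧ ‖g₂ z s‖ ≤ C * r^2 ∧ ‖g₃ z s‖ ≤ C * r^2) →
    (∀ z z', ‖z - (w₀, 0, 0)‖ ≤ 2*r → ‖z' - (w₀, 0, 0)‖ ≤ 2*r → ∀ s ∈ Icc (-T) T,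
        ‖g₁ z s - g₁ z' s‖ ≤ C * r * ‖z - z'‖ ∧
        ‖g₂ z s - g₂ z' s‖ ≤ C * r * ‖z - z'‖ ∧
        ‖g₃ z s - g₃ z' s‖ ≤ C * r * ‖z - z'‖) →
    ∀ f : ℝ → EuclideanSpace ℝ (Fin (2*m)) × EuclideanSpace ℝ (Fin k) × EuclideanSpace ℝ (Fin k),
      Continuous f → (∀ τ ∈ Icc (-T) T, ‖f τ - (w₀, 0, 0)‖ ≤ 2*r) →
      (∀ τ ∈ Icc (-T) T, shilMap T w₀ uP vM g₁ g₂ g₃ f τ = f τ) →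
      ∀ τ ∈ Icc (-T) T,
        ‖(f τ).1 - w₀‖ ≤ C * r^2 * T * Real.exp (-2*T) ∧
        ‖Real.exp (-τ - T) • (f τ).2.1 - Real.exp (-τ - T) • uP‖ ≤ C * r^2 * Real.exp (-2*T) ∧
        ‖Real.exp (τ - T) • (f τ).2.2 - Real.exp (τ - T) • vM‖ ≤ C * r^2 * Real.exp (-2*T) ∧
        (r < C⁻¹ →
          ‖Real.exp (-τ - T) • (f τ).2.1‖ ≤ r ∧ ‖Real.exp (τ - T) • (f τ).2.2‖ ≤ r) := by
  refine ⟨1, one_pos,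
    fun r hr _ T _ w₀ uP vM huP hvM g₁ g₂ g₃ _ _ _ hbound _ f _ hball hfix τ hτ => ?_⟩
  have hg : ∀ s ∈ Icc (-T) T,
      ‖g₁ (f s) s‖ ≤ C * r^2 ∧ ‖g₂ (f s) s‖ ≤ C * r^2 ∧ ‖g₃ (f s) s‖ ≤ C * r^2 :=
    fun s hs => hbound (f s) (hball s hs) s hs
  have hM : 0 ≤ C * r ^ 2 * Real.exp (-2 * T) :=
    mul_nonneg ((norm_nonneg _).trans (hg τ hτ).1) (Real.exp_pos _).le
  obtain ⟨hw, hξ, hη⟩ := shilMap_eq_iff.mp (hfix τ hτ)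
  have hu := norm_exp_smul_integral_exp_smul_le hτ.1
    fun s hs => (hg s ⟨hs.1, hs.2.trans hτ.2⟩).2.1
  have hv := norm_exp_smul_integral_exp_neg_smul_le hτ.2
    fun s hs => (hg s ⟨hτ.1.trans hs.1, hs.2⟩).2.2
  rw [← hξ] at hu
  rw [← hη] at hv
  refine ⟨?_, ?_, ?_, fun hrC => ?_⟩
  · rw [hw, intervalIntegral.integral_smul, norm_smul, Real.norm_of_nonneg (Real.exp_pos _).le,
      mul_comm]
    exact mul_le_mul_of_nonneg_right
      (norm_integral_le_of_abs_le (abs_le.mpr hτ) fun s hs => (hg s hs).1) (Real.exp_pos _).le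
  · rw [← smul_sub]
    exact hu.trans (mul_le_of_le_one_right hM (sub_le_self _ (Real.exp_pos _).le))
  · rw [← smul_sub]
    exact hv.trans (mul_le_of_le_one_right hM (sub_le_self _ (Real.exp_pos _).le))
  have hδ : C * r ^ 2 * Real.exp (-2 * T) ≤ r :=
    mul_sq_mul_le_of_lt_inv hr (Real.exp_le_one_iff.mpr (by linarith [hτ.1, hτ.2])) hrC
  exact ⟨norm_smul_le_of_norm_smul_sub_le (Real.exp_pos _).le
      (Real.exp_le_one_iff.mpr (by linarith [hτ.1])) huP hδ hu,
    norm_smul_le_of_norm_smul_sub_le (Real.exp_pos _).le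
      (Real.exp_le_one_iff.mpr (by linarith [hτ.2])) hvM hδ hv⟩

/-- Estimates for the Shilnikov fixed point `(w, ξ, η)`: with `u(τ) = e^{−τ−T} ξ(τ)`,
`v(τ) = e^{τ−T} η(τ)`, one has `|w(τ)−w₀| ≤ C r² T e^{−2T}`,
`|u(τ) − u₊e^{−τ−T}| ≤ C r² e^{−2T}`, `|v(τ) − v₋e^{τ−T}| ≤ C r² e^{−2T}`, and if
`r < C⁻¹` then `|u(τ)| ≤ r`, `|v(τ)| ≤ r` for all `|τ| ≤ T`. -/
theorem stmt5 (m k : ℕ) (C : ℝ) (hC : 0 < C) :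
    ∃ r₀ > 0, ∀ r : ℝ, 0 < r → r ≤ r₀ →
    ∀ T : ℝ, 1 ≤ T →
    ∀ (w₀ : EuclideanSpace ℝ (Fin (2*m))) (uP vM : EuclideanSpace ℝ (Fin k)),
      ‖uP‖ ≤ r → ‖vM‖ ≤ r →
    ∀ (g₁ : EuclideanSpace ℝ (Fin (2*m)) × EuclideanSpace ℝ (Fin k) × EuclideanSpace ℝ (Fin k)
        → ℝ → EuclideanSpace ℝ (Fin (2*m)))
      (g₂ g₃ : EuclideanSpace ℝ (Fin (2*m)) × EuclideanSpace ℝ (Fin k) × EuclideanSpace ℝ (Fin k)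
        → ℝ → EuclideanSpace ℝ (Fin k)),
    Continuous (fun p : (EuclideanSpace ℝ (Fin (2*m)) × EuclideanSpace ℝ (Fin k) ×
        EuclideanSpace ℝ (Fin k)) × ℝ => g₁ p.1 p.2) →
    Continuous (fun p : (EuclideanSpace ℝ (Fin (2*m)) × EuclideanSpace ℝ (Fin k) ×
        EuclideanSpace ℝ (Fin k)) × ℝ => g₂ p.1 p.2) →
    Continuous (fun p : (EuclideanSpace ℝ (Fin (2*m)) × EuclideanSpace ℝ (Fin k) ×
        EuclideanSpace ℝ (Fin k)) × ℝ => g₃ p.1 p.2) →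
    (∀ z, ‖z - (w₀, 0, 0)‖ ≤ 2*r → ∀ s ∈ Icc (-T) T,
        ‖g₁ z s‖ ≤ C * r^2 ∧ ‖g₂ z s‖ ≤ C * r^2 ∧ ‖g₃ z s‖ ≤ C * r^2) →
    (∀ z z', ‖z - (w₀, 0, 0)‖ ≤ 2*r → ‖z' - (w₀, 0, 0)‖ ≤ 2*r → ∀ s ∈ Icc (-T) T,
        ‖g₁ z s - g₁ z' s‖ ≤ C * r * ‖z - z'‖ ∧
        ‖g₂ z s - g₂ z' s‖ ≤ C * r * ‖z - z'‖ ∧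
        ‖g₃ z s - g₃ z' s‖ ≤ C * r * ‖z - z'‖) →
    ∀ f : ℝ → EuclideanSpace ℝ (Fin (2*m)) × EuclideanSpace ℝ (Fin k) × EuclideanSpace ℝ (Fin k),
      Continuous f → (∀ τ ∈ Icc (-T) T, ‖f τ - (w₀, 0, 0)‖ ≤ 2*r) →
      (∀ τ ∈ Icc (-T) T, shilMap T w₀ uP vM g₁ g₂ g₃ f τ = f τ) →
      ∀ τ ∈ Icc (-T) T,
        ‖(f τ).1 - w₀‖ ≤ C * r^2 * T * Real.exp (-2*T) ∧
        ‖Real.exp (-τ - T) • (f τ).2.1 - Real.exp (-τ - T) • uP‖ ≤ C * r^2 * Real.exp (-2*T) ∧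
        ‖Real.exp (τ - T) • (f τ).2.2 - Real.exp (τ - T) • vM‖ ≤ C * r^2 * Real.exp (-2*T) ∧
        (r < C⁻¹ →
          ‖Real.exp (-τ - T) • (f τ).2.1‖ ≤ r ∧ ‖Real.exp (τ - T) • (f τ).2.2‖ ≤ r) :=
  stmt5_general m k C
end

section
/- Let f(x, y) be a C² function of two (vector) variables and suppose y = h(x) is a C¹ family of critical points of y ↦ f(x, y) which are nondegenerate (the Hessian ∂²f/∂y² (x, h(x)) is invertible). Set g(x) = f(x, h(x)). Then a point (x₀, y₀) with y₀ = h(x₀) is a nondegenerate critical point of f if and only if x₀ is a nondegenerate critical point of g. -/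
/-!
Differentiating the identity `∂_y f (x, h x) = 0` shows that the Hessian `Φ` of `f` at
`(x₀, h x₀)` vanishes on pairs (tangent vector `(u, h' u)` of the graph of `h`, vertical
vector `(0, w)`), while the chain rule gives `g' x = ∂_x f (x, h x)` near `x₀` and
`g'' x₀ u v = Φ (u, h' u) (v, 0)`. So in the splitting `E × F = graph h' ⊕ F` the form `Φ` is
block triangular with diagonal blocks `g'' x₀` and the invertible `∂²_y f`: `g'' x₀` is a
Schur complement, and `Φ` is invertible exactly when `g'' x₀` is.
-/

open ContinuousLinearMap Function

section LinearAlgebra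

variable {𝕜 E F : Type*} [NontriviallyNormedField 𝕜]
  [NormedAddCommGroup E] [NormedSpace 𝕜 E] [NormedAddCommGroup F] [NormedSpace 𝕜 F]

theorem ContinuousLinearMap.bijective_iff_injective_of_toDual [CompleteSpace 𝕜]
    [FiniteDimensional 𝕜 E] (L : E →L[𝕜] E →L[𝕜] 𝕜) : Bijective L ↔ Injective L := by
  have hdim : Module.finrank 𝕜 E = Module.finrank 𝕜 (E →L[𝕜] 𝕜) := by
    rw [← LinearMap.toContinuousLinearMap.finrank_eq, Module.finrank_linearMap_self]
  exact ⟨Bijective.injective, fun hinj => ⟨hinj,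
    (LinearMap.injective_iff_surjective_of_finrank_eq_finrank (f := L.toLinearMap) hdim).mp hinj⟩⟩

/-- `S` is the Schur complement of the block `(w, w') ↦ Φ (0, w) (0, w')`, which `hC` makes
nondegenerate. -/
theorem injective_iff_injective_schur (Φ : E × F →L[𝕜] E × F →L[𝕜] 𝕜) (H : E →L[𝕜] F)
    (S : E →L[𝕜] E →L[𝕜] 𝕜) (hS : ∀ u v, S u v = Φ (u, H u) (v, 0))
    (hmix : ∀ u w, Φ (u, H u) (0, w) = 0)
    (hC : ∀ w, (∀ w', Φ (0, w) (0, w') = 0) → w = 0) :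
    Injective Φ ↔ Injective S := by
  have hrow : ∀ u v w, Φ (u, H u) (v, w) = S u v := fun u v w => by
    rw [← Prod.fst_add_snd (v, w), map_add, hS, hmix, add_zero]
  simp only [injective_iff_map_eq_zero]
  constructor
  · intro hΦ u hu
    have : Φ (u, H u) = 0 := by
      refine ContinuousLinearMap.ext fun ⟨v, w⟩ => ?_
      rw [hrow, hu, zero_apply, zero_apply]
    exact congrArg Prod.fst (hΦ _ this)
  · rintro hSinj ⟨u, w⟩ hp
    have hw : w = H u := by
      rw [← sub_eq_zero]
      refine hC _ fun w' => ?_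
      have : ((0 : E), w - H u) = (u, w) - (u, H u) := by simp
      rw [this, map_sub, hp, sub_apply, hmix]
      simp
    have hu : u = 0 := hSinj u <| by
      ext v
      rw [← hrow u v 0, ← hw, hp]
      rfl
    simp [hu, hw]

end LinearAlgebra

section Calculus

variable {𝕜 E F G : Type*} [NontriviallyNormedField 𝕜]
  [NormedAddCommGroup E] [NormedSpace 𝕜 E] [NormedAddCommGroup F] [NormedSpace 𝕜 F]
  [NormedAddCommGroup G] [NormedSpace 𝕜 G]

theorem ContinuousLinearMap.eq_zero_iff_comp_inl_eq_zero {L : E × F →L[𝕜] G}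
    (hL : L.comp (inr 𝕜 E F) = 0) : L = 0 ↔ L.comp (inl 𝕜 E F) = 0 := by
  refine ⟨fun h => by rw [h, zero_comp], fun h => ?_⟩
  refine ContinuousLinearMap.ext fun p => ?_
  rw [← L.comp_inl_add_comp_inr, h, hL, zero_apply, zero_apply, add_zero, zero_apply]

theorem DifferentiableAt.fderiv_comp_prodMk_right {f : E × F → G} {x : E} {y : F}
    (hf : DifferentiableAt 𝕜 f (x, y)) :
    fderiv 𝕜 (fun y' => f (x, y')) y = (fderiv 𝕜 f (x, y)).comp (inr 𝕜 E F) :=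
  (hf.hasFDerivAt.comp y (hasFDerivAt_prodMk_right x y)).fderiv

theorem hasFDerivAt_comp_graph {f : E × F → G} {h : E → F} {f' : E × F →L[𝕜] G} {x : E}
    (hf : HasFDerivAt f f' (x, h x)) (hh : DifferentiableAt 𝕜 h x) :
    HasFDerivAt (fun x' => f (x', h x'))
      (f'.comp ((ContinuousLinearMap.id 𝕜 E).prod (fderiv 𝕜 h x))) x :=
  hf.comp x ((hasFDerivAt_id x).prodMk hh.hasFDerivAt)

theorem fderiv_comp_graph_of_fderiv_snd_eq_zero {f : E × F → G} {h : E → F} {x : E}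
    (hf : DifferentiableAt 𝕜 f (x, h x)) (hh : DifferentiableAt 𝕜 h x)
    (hcrit : fderiv 𝕜 (fun y => f (x, y)) (h x) = 0) :
    fderiv 𝕜 (fun x' => f (x', h x')) x = (fderiv 𝕜 f (x, h x)).comp (inl 𝕜 E F) := by
  rw [hf.fderiv_comp_prodMk_right] at hcrit
  rw [(hasFDerivAt_comp_graph hf.hasFDerivAt hh).fderiv]
  ext u
  rw [ContinuousLinearMap.comp_apply, ← comp_inl_add_comp_inr, hcrit, zero_apply, add_zero]
  rfl

theorem HasFDerivAt.precomp {X E' : Type*} [NormedAddCommGroup X] [NormedSpace 𝕜 X]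
    [NormedAddCommGroup E'] [NormedSpace 𝕜 E'] {A : X → E →L[𝕜] G} {A' : X →L[𝕜] E →L[𝕜] G}
    {x : X} (hA : HasFDerivAt A A' x) (L : E' →L[𝕜] E) :
    HasFDerivAt (fun x => (A x).comp L) ((ContinuousLinearMap.precomp G L).comp A') x := by
  exact (ContinuousLinearMap.precomp G L).hasFDerivAt.comp x hA

section Hessian

variable {f : E × F → G} {h : E → F} {x₀ : E}

theorem fderiv_fderiv_comp_prodMk_right_apply {y₀ : F} (hf : Differentiable 𝕜 f)
    (hf' : DifferentiableAt 𝕜 (fderiv 𝕜 f) (x₀, y₀)) (w w' : F) :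
    fderiv 𝕜 (fun y => fderiv 𝕜 (fun y' => f (x₀, y')) y) y₀ w w' =
      fderiv 𝕜 (fderiv 𝕜 f) (x₀, y₀) (0, w) (0, w') := by
  have hpart : (fun y => fderiv 𝕜 (fun y' => f (x₀, y')) y) =
      fun y => (fderiv 𝕜 f (x₀, y)).comp (inr 𝕜 E F) :=
    funext fun y => (hf _).fderiv_comp_prodMk_right
  have hslice : HasFDerivAt (fun y => fderiv 𝕜 f (x₀, y))
      ((fderiv 𝕜 (fderiv 𝕜 f) (x₀, y₀)).comp (inr 𝕜 E F)) y₀ :=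
    hf'.hasFDerivAt.comp y₀ (hasFDerivAt_prodMk_right x₀ y₀)
  rw [hpart, (hslice.precomp _).fderiv]
  rfl

theorem fderiv_fderiv_comp_graph_apply (hf : Differentiable 𝕜 f)
    (hf' : DifferentiableAt 𝕜 (fderiv 𝕜 f) (x₀, h x₀)) (hh : Differentiable 𝕜 h)
    (hcrit : ∀ᶠ x in nhds x₀, fderiv 𝕜 (fun y => f (x, y)) (h x) = 0) (u v : E) :
    fderiv 𝕜 (fun x => fderiv 𝕜 (fun x' => f (x', h x')) x) x₀ u v =
      fderiv 𝕜 (fderiv 𝕜 f) (x₀, h x₀) (u, fderiv 𝕜 h x₀ u) (v, 0) := by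
  have hev : (fun x => fderiv 𝕜 (fun x' => f (x', h x')) x) =ᶠ[nhds x₀]
      fun x => (fderiv 𝕜 f (x, h x)).comp (inl 𝕜 E F) := by
    filter_upwards [hcrit] with x hx
    exact fderiv_comp_graph_of_fderiv_snd_eq_zero (hf _) (hh x) hx
  rw [hev.fderiv_eq, ((hasFDerivAt_comp_graph hf'.hasFDerivAt (hh x₀)).precomp _).fderiv]
  rfl

theorem fderiv_fderiv_graph_tangent_vertical_eq_zero (hf : Differentiable 𝕜 f)
    (hf' : DifferentiableAt 𝕜 (fderiv 𝕜 f) (x₀, h x₀)) (hh : Differentiable 𝕜 h)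
    (hcrit : ∀ᶠ x in nhds x₀, fderiv 𝕜 (fun y => f (x, y)) (h x) = 0) (u : E) (w : F) :
    fderiv 𝕜 (fderiv 𝕜 f) (x₀, h x₀) (u, fderiv 𝕜 h x₀ u) (0, w) = 0 := by
  have hev : (fun x => (fderiv 𝕜 f (x, h x)).comp (inr 𝕜 E F)) =ᶠ[nhds x₀] fun _ => 0 := by
    filter_upwards [hcrit] with x hx
    rw [← (hf _).fderiv_comp_prodMk_right, hx]
  have hderiv := ((hasFDerivAt_comp_graph hf'.hasFDerivAt (hh x₀)).precomp (inr 𝕜 E F)).fderiv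
  rw [hev.fderiv_eq, fderiv_const_apply] at hderiv
  exact congrArg (fun L : E →L[𝕜] F →L[𝕜] G => L u w) hderiv.symm

end Hessian

end Calculus

/-- If `y = h(x)` is a family of nondegenerate critical points of `y ↦ f(x, y)` and
`g(x) = f(x, h(x))`, then `(x₀, h(x₀))` is a nondegenerate critical point of `f` iff
`x₀` is a nondegenerate critical point of `g`. -/
theorem stmt6 (n m : ℕ)
    (f : EuclideanSpace ℝ (Fin n) × EuclideanSpace ℝ (Fin m) → ℝ)
    (h : EuclideanSpace ℝ (Fin n) → EuclideanSpace ℝ (Fin m))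
    (hf : ContDiff ℝ 2 f) (hh : ContDiff ℝ 1 h)
    (x₀ : EuclideanSpace ℝ (Fin n)) (y₀ : EuclideanSpace ℝ (Fin m)) (hy₀ : y₀ = h x₀)
    (hcrit : ∀ᶠ x in nhds x₀, fderiv ℝ (fun y => f (x, y)) (h x) = 0)
    (hhess : ∀ᶠ x in nhds x₀,
      Function.Bijective ⇑(fderiv ℝ (fun y => fderiv ℝ (fun y' => f (x, y')) y) (h x))) :
    (fderiv ℝ f (x₀, y₀) = 0 ∧
        Function.Bijective ⇑(fderiv ℝ (fun p => fderiv ℝ f p) (x₀, y₀))) ↔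
      (fderiv ℝ (fun x => f (x, h x)) x₀ = 0 ∧
        Function.Bijective
          ⇑(fderiv ℝ (fun x => fderiv ℝ (fun x' => f (x', h x')) x) x₀)) := by
  subst hy₀
  have hf₁ : Differentiable ℝ f := hf.differentiable two_ne_zero
  have hf₂ : Differentiable ℝ (fderiv ℝ f) :=
    (hf.fderiv_right (m := 1) le_rfl).differentiable one_ne_zero
  have hh₁ : Differentiable ℝ h := hh.differentiable one_ne_zero
  refine and_congr ?_ ?_
  · rw [fderiv_comp_graph_of_fderiv_snd_eq_zero (hf₁ _) (hh₁ x₀) hcrit.self_of_nhds,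
      eq_zero_iff_comp_inl_eq_zero]
    rw [← (hf₁ _).fderiv_comp_prodMk_right]
    exact hcrit.self_of_nhds
  · rw [bijective_iff_injective_of_toDual, bijective_iff_injective_of_toDual]
    refine injective_iff_injective_schur _ (fderiv ℝ h x₀) _
      (fderiv_fderiv_comp_graph_apply hf₁ (hf₂ _) hh₁ hcrit)
      (fderiv_fderiv_graph_tangent_vertical_eq_zero hf₁ (hf₂ _) hh₁ hcrit) fun w hw => ?_
    refine hhess.self_of_nhds.injective (ContinuousLinearMap.ext fun w' => ?_)
    rw [fderiv_fderiv_comp_prodMk_right_apply hf₁ (hf₂ _), hw, map_zero, zero_apply]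
end

section
/- Let λ > 0, κ > 0, r > 0 and let a = −λ ⟨v₊, v₋⟩ where ⟨v₊, v₋⟩ ≤ −κ r². Consider the equation e^{−2λT} · a · (1 + R(T)) = μ in the unknown T, where R is smooth with |R(T)| ≤ C e^{−λT}. Then for μ > 0 sufficiently small there exists a unique large solution T(μ), and T(μ) = (|ln μ| + ln a)/(2λ) + O(√μ) as μ → 0⁺. -/
/-!
With `f(T) = e^{-2λT} a (1 + R(T))` one has `f' = e^{-2λT} a (R' - 2λ(1 + R))`, which is negative
as soon as `C e^{-λT} ≤ min (1/2) (λ/2)`; since `R → 0`, also `f → 0`, so beyond such a point `T₁`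
`f` is a bijection onto `(0, f(T₁)]`. Taking logarithms in `f(T) = μ` gives
`T - (|ln μ| + ln a)/(2λ) = ln(1 + R(T))/(2λ) = O(e^{-λT})`, and `e^{-2λT} ≤ 2μ/a` turns this into
`O(√μ)`.
-/

open Real Set Filter Topology

theorem Real.abs_log_one_add_le_two_mul_abs {x : ℝ} (hx : |x| ≤ 1 / 2) :
    |log (1 + x)| ≤ 2 * |x| := by
  obtain ⟨hx₁, hx₂⟩ := abs_le.mp hx
  have hpos : 0 < 1 + x := by linarith
  have hlower : 1 - (1 + x)⁻¹ ≤ log (1 + x) := one_sub_inv_le_log_of_pos hpos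
  have hupper : log (1 + x) ≤ x := by linarith [log_le_sub_one_of_pos hpos]
  have hinv : 1 - (1 + x)⁻¹ = x / (1 + x) := by field_simp; ring
  have hdiv : -(2 * |x|) ≤ x / (1 + x) := by
    rw [le_div_iff₀ hpos]
    cases abs_cases x <;> nlinarith
  rw [abs_le]
  constructor <;> linarith [le_abs_self x, abs_nonneg x]

theorem tendsto_const_mul_exp_neg_mul_atTop {lam : ℝ} (hlam : 0 < lam) (C : ℝ) :
    Tendsto (fun T => C * exp (-lam * T)) atTop (𝓝 0) := by
  have h : Tendsto (fun T => exp (-(lam * T))) atTop (𝓝 0) :=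
    tendsto_exp_neg_atTop_nhds_zero.comp (tendsto_id.const_mul_atTop hlam)
  simpa [neg_mul] using h.const_mul C

theorem exists_forall_ge_const_mul_exp_neg_mul_le (T₀ : ℝ) {lam m : ℝ} (hlam : 0 < lam)
    (hm : 0 < m) (C : ℝ) : ∃ T₁, T₀ ≤ T₁ ∧ ∀ T, T₁ ≤ T → C * exp (-lam * T) ≤ m := by
  obtain ⟨T₁, hT₁⟩ := eventually_atTop.mp
    ((eventually_ge_atTop T₀).and
      ((tendsto_const_mul_exp_neg_mul_atTop hlam C).eventually_le_const hm))
  exact ⟨T₁, (hT₁ T₁ le_rfl).1, fun T hT => (hT₁ T hT).2⟩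

theorem tendsto_zero_of_abs_le_const_mul_exp {R : ℝ → ℝ} {lam C T₀ : ℝ} (hlam : 0 < lam)
    (hR : ∀ T, T₀ ≤ T → |R T| ≤ C * exp (-lam * T)) : Tendsto R atTop (𝓝 0) :=
  squeeze_zero_norm' (eventually_atTop.mpr ⟨T₀, hR⟩) (tendsto_const_mul_exp_neg_mul_atTop hlam C)

noncomputable def orbitEnergy (lam a : ℝ) (R : ℝ → ℝ) (T : ℝ) : ℝ :=
  exp (-2 * lam * T) * a * (1 + R T)

section orbitEnergy

variable {lam a : ℝ} {R : ℝ → ℝ}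

theorem continuous_orbitEnergy (hR : Continuous R) : Continuous (orbitEnergy lam a R) := by
  unfold orbitEnergy
  fun_prop

theorem hasDerivAt_orbitEnergy {T : ℝ} (hR : DifferentiableAt ℝ R T) :
    HasDerivAt (orbitEnergy lam a R)
      (exp (-2 * lam * T) * a * (deriv R T - 2 * lam * (1 + R T))) T := by
  have hexp : HasDerivAt (fun T => exp (-2 * lam * T)) (exp (-2 * lam * T) * (-2 * lam)) T := by
    simpa using ((hasDerivAt_id T).const_mul (-2 * lam)).exp
  exact ((hexp.mul_const a).mul (hR.hasDerivAt.const_add 1)).congr_deriv (by ring)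

theorem strictAntiOn_orbitEnergy {T₁ : ℝ} (ha : 0 < a) (hR : Differentiable ℝ R)
    (hR' : ∀ T, T₁ < T → deriv R T < 2 * lam * (1 + R T)) :
    StrictAntiOn (orbitEnergy lam a R) (Ici T₁) := by
  have hdiff : Differentiable ℝ (orbitEnergy lam a R) :=
    fun T => (hasDerivAt_orbitEnergy (hR T)).differentiableAt
  refine strictAntiOn_of_deriv_neg (convex_Ici T₁) hdiff.continuous.continuousOn fun T hT => ?_
  rw [interior_Ici] at hT
  rw [(hasDerivAt_orbitEnergy (hR T)).deriv]
  exact mul_neg_of_pos_of_neg (by positivity) (sub_neg.mpr (hR' T hT))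

theorem tendsto_orbitEnergy_atTop (hlam : 0 < lam) (hR : Tendsto R atTop (𝓝 0)) :
    Tendsto (orbitEnergy lam a R) atTop (𝓝 0) := by
  have hexp : Tendsto (fun T => exp (-2 * lam * T)) atTop (𝓝 0) := by
    simpa [mul_comm] using tendsto_const_mul_exp_neg_mul_atTop (by positivity : 0 < 2 * lam) 1
  have h := (hexp.mul_const a).mul (hR.const_add 1)
  rwa [zero_mul, zero_mul] at h

theorem log_orbitEnergy {T : ℝ} (ha : 0 < a) (hR : 0 < 1 + R T) :
    log (orbitEnergy lam a R T) = -2 * lam * T + log a + log (1 + R T) := by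
  rw [orbitEnergy, log_mul (by positivity) hR.ne', log_mul (exp_ne_zero _) ha.ne', log_exp]

theorem exp_neg_mul_le_sqrt_orbitEnergy {T : ℝ} (ha : 0 < a) (hR : 1 / 2 ≤ 1 + R T) :
    exp (-lam * T) ≤ sqrt (2 / a) * sqrt (orbitEnergy lam a R T) := by
  have hE : exp (-2 * lam * T) * a * (1 / 2) ≤ orbitEnergy lam a R T :=
    mul_le_mul_of_nonneg_left hR (by positivity)
  have hsq : exp (-lam * T) ^ 2 = exp (-2 * lam * T) := by
    rw [← exp_nat_mul]
    ring_nf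
  calc exp (-lam * T) = sqrt (exp (-lam * T) ^ 2) := (sqrt_sq (exp_pos _).le).symm
    _ ≤ sqrt (2 / a * orbitEnergy lam a R T) := by
        refine sqrt_le_sqrt ?_
        rw [hsq, div_mul_eq_mul_div, le_div_iff₀ ha]
        linarith
    _ = sqrt (2 / a) * sqrt (orbitEnergy lam a R T) := sqrt_mul (by positivity) _

theorem abs_sub_log_div_le_of_orbitEnergy_eq {C T μ : ℝ} (hlam : 0 < lam) (ha : 0 < a)
    (hRC : |R T| ≤ C * exp (-lam * T)) (hR : |R T| ≤ 1 / 2)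
    (hμ : orbitEnergy lam a R T = μ) (hμ₁ : μ ≤ 1) :
    |T - (|log μ| + log a) / (2 * lam)| ≤ C / lam * sqrt (2 / a) * sqrt μ := by
  have hR₁ : 1 / 2 ≤ 1 + R T := by linarith [neg_abs_le (R T)]
  have hμ₀ : 0 < μ := hμ ▸ by unfold orbitEnergy; positivity
  have hdefect : T - (|log μ| + log a) / (2 * lam) = log (1 + R T) / (2 * lam) := by
    rw [abs_of_nonpos (log_nonpos hμ₀.le hμ₁), ← hμ, log_orbitEnergy ha (by linarith)]
    field_simp
    ring
  have hexp := exp_neg_mul_le_sqrt_orbitEnergy (lam := lam) ha hR₁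
  rw [hμ] at hexp
  rw [hdefect, abs_div, abs_of_pos (by positivity : 0 < 2 * lam), div_le_iff₀ (by positivity)]
  calc |log (1 + R T)| ≤ 2 * (C * exp (-lam * T)) :=
        (abs_log_one_add_le_two_mul_abs hR).trans (by linarith)
    _ ≤ 2 * (C * (sqrt (2 / a) * sqrt μ)) := by
        have : 0 ≤ C := (mul_nonneg_iff_of_pos_right (exp_pos _)).mp ((abs_nonneg _).trans hRC)
        gcongr
    _ = C / lam * sqrt (2 / a) * sqrt μ * (2 * lam) := by field_simp

end orbitEnergy

/-- Solving `e^{−2λT} a (1 + R(T)) = μ` for `T`, where `a = −λ⟨v₊, v₋⟩ ≥ λκr² > 0` and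
`|R(T)|, |R'(T)| ≤ C e^{−λT}`: for small `μ > 0` there is a unique large solution `T(μ)`,
with `T(μ) = (|ln μ| + ln a)/(2λ) + O(√μ)`. -/
theorem stmt7 (k : ℕ) (lam kap r C T₀ : ℝ)
    (hlam : 0 < lam) (hkap : 0 < kap) (hr : 0 < r) (hC : 0 < C)
    (vP vM : EuclideanSpace ℝ (Fin k))
    (hinner : (inner ℝ vP vM : ℝ) ≤ -kap * r^2)
    (a : ℝ) (ha : a = -lam * (inner ℝ vP vM : ℝ))
    (R : ℝ → ℝ) (hR : ContDiff ℝ 1 R)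
    (hRb : ∀ T, T₀ ≤ T → |R T| ≤ C * Real.exp (-lam * T))
    (hRd : ∀ T, T₀ ≤ T → |deriv R T| ≤ C * Real.exp (-lam * T)) :
    ∃ μ₀ > 0, ∃ K > 0, ∃ T₁, T₀ ≤ T₁ ∧ ∃ Tf : ℝ → ℝ,
      ∀ μ ∈ Set.Ioc (0:ℝ) μ₀,
        (T₁ ≤ Tf μ ∧ Real.exp (-2*lam*(Tf μ)) * a * (1 + R (Tf μ)) = μ) ∧
        (∀ T', T₁ ≤ T' → Real.exp (-2*lam*T') * a * (1 + R T') = μ → T' = Tf μ) ∧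
        |Tf μ - (|Real.log μ| + Real.log a)/(2*lam)| ≤ K * Real.sqrt μ := by
  have ha₀ : 0 < a := by
    rw [ha]
    nlinarith [mul_pos hkap (pow_pos hr 2)]
  obtain ⟨T₁, hT₀, hsmall⟩ := exists_forall_ge_const_mul_exp_neg_mul_le T₀ hlam
    (lt_min one_half_pos (half_pos hlam)) C
  have hR_le : ∀ T, T₁ ≤ T → |R T| ≤ 1 / 2 := fun T hT =>
    (hRb T (hT₀.trans hT)).trans ((hsmall T hT).trans (min_le_left _ _))
  have hR'_le : ∀ T, T₁ ≤ T → |deriv R T| ≤ lam / 2 := fun T hT =>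
    (hRd T (hT₀.trans hT)).trans ((hsmall T hT).trans (min_le_right _ _))
  have hanti : StrictAntiOn (orbitEnergy lam a R) (Ici T₁) :=
    strictAntiOn_orbitEnergy ha₀ (hR.differentiable one_ne_zero) fun T hT => by
      -- `R' ≤ λ/2 < λ ≤ 2λ(1 + R)`
      nlinarith [neg_abs_le (R T), le_abs_self (deriv R T), hR_le T hT.le, hR'_le T hT.le]
  have hlim : Tendsto (orbitEnergy lam a R) atTop (𝓝 0) :=
    tendsto_orbitEnergy_atTop hlam (tendsto_zero_of_abs_le_const_mul_exp hlam hRb)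
  have hRT₁ : 1 / 2 ≤ 1 + R T₁ := by linarith [neg_abs_le (R T₁), hR_le T₁ le_rfl]
  refine ⟨min (orbitEnergy lam a R T₁) 1, lt_min (by unfold orbitEnergy; positivity) one_pos,
    C / lam * sqrt (2 / a), by positivity, T₁, hT₀,
    Function.invFunOn (orbitEnergy lam a R) (Ici T₁), fun μ hμ => ?_⟩
  obtain ⟨hmem, heq⟩ := Function.invFunOn_pos <|
    isPreconnected_Ici.intermediate_value_Ioc self_mem_Ici
      (le_principal_iff.mpr (Ici_mem_atTop T₁)) (continuous_orbitEnergy hR.continuous).continuousOn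
      hlim ⟨hμ.1, hμ.2.trans (min_le_left _ _)⟩
  exact ⟨⟨hmem, heq⟩, fun T' hT' hT'eq => hanti.injOn hT' hmem (hT'eq.trans heq.symm),
    abs_sub_log_div_le_of_orbitEnergy_eq hlam ha₀ (hRb _ (hT₀.trans hmem)) (hR_le _ hmem) heq
      (hμ.2.trans (min_le_right _ _))⟩
end
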